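/- In the theory T_H, the membership characterizations of H⁺ and H⁻ are provable: T_H semantically entails ∀x(x∈H⁺ ↔ (x∈x ∨ x=H⁺)) and T_H semantically entails ∀x(x∈H⁻ ↔ (x∈x ∧ x≠H⁻)). -/

import Mathlib

open FirstOrder FirstOrder.Language

namespace CoRussellParadox

/-- The language `L'` with a single binary relation symbol `∈` and four constant
symbols `A`, `B`, `H⁺`, `H⁻` (coded as `Fin 4`). -/
def L : Language :=
  ⟨fun n => match n with | 0 => Fin 4 | _ => Empty,
   fun n => match n with | 2 => Unit | _ => Empty⟩

/-- The membership relation symbol. -/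
def memRel : L.Relations 2 := Unit.unit

/-- The constant symbol `A`. -/
def cA : L.Constants := (0 : Fin 4)
/-- The constant symbol `B`. -/
def cB : L.Constants := (1 : Fin 4)
/-- The constant symbol `H⁺`. -/
def cHp : L.Constants := (2 : Fin 4)
/-- The constant symbol `H⁻`. -/
def cHm : L.Constants := (3 : Fin 4)

/-- `memF t₁ t₂` is the atomic formula `t₁ ∈ t₂`. -/
def memF {n : ℕ} (t₁ t₂ : L.Term (Empty ⊕ Fin n)) : L.BoundedFormula Empty n :=
  memRel.boundedFormula₂ t₁ t₂

/-- Inclusion of a term in context `n` into the larger context `n + k`. -/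
def tl {n : ℕ} (k : ℕ) (t : L.Term (Empty ⊕ Fin n)) : L.Term (Empty ⊕ Fin (n + k)) :=
  t.relabel (Sum.map id (Fin.castAdd k))

/-- `z = ⟨a,b⟩` (Kuratowski pair), as the formula
`∃p∃q(∀x(x∈p ↔ x=a) ∧ ∀x(x∈q ↔ (x=a ∨ x=b)) ∧ ∀x(x∈z ↔ (x=p ∨ x=q)))`. -/
def isPairF {n : ℕ} (z a b : L.Term (Empty ⊕ Fin n)) : L.BoundedFormula Empty n :=
  ∃' ∃' (
    (∀' (memF (&⟨n + 2, by omega⟩) (&⟨n, by omega⟩) ⇔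
        ((&(⟨n + 2, by omega⟩ : Fin (n + 3))) =' tl 3 a))) ⊓
    (∀' (memF (&⟨n + 2, by omega⟩) (&⟨n + 1, by omega⟩) ⇔
        (((&(⟨n + 2, by omega⟩ : Fin (n + 3))) =' tl 3 a) ⊔
         ((&(⟨n + 2, by omega⟩ : Fin (n + 3))) =' tl 3 b)))) ⊓
    (∀' (memF (&⟨n + 2, by omega⟩) (tl 3 z) ⇔
        (((&(⟨n + 2, by omega⟩ : Fin (n + 3))) =' (&⟨n, by omega⟩)) ⊔
         ((&(⟨n + 2, by omega⟩ : Fin (n + 3))) =' (&⟨n + 1, by omega⟩))))))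

/-- Extensionality: `∀y∀z(∀x(x∈y ↔ x∈z) → y=z)`. -/
def extAx : L.Sentence :=
  ∀' ∀' ((∀' (memF (&2) (&0) ⇔ memF (&2) (&1))) ⟹ ((&0) =' (&1)))

/-- Pairing: `∀a∀b∃y∀x(x∈y ↔ (x=a ∨ x=b))`. -/
def pairAx : L.Sentence :=
  ∀' ∀' ∃' ∀' (memF (&3) (&2) ⇔ (((&3) =' (&0)) ⊔ ((&3) =' (&1))))

/-- Extracting: `∀a∃y∀x(x∈y ↔ ∃z(z=⟨a,x⟩ ∧ z∈a))`. -/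
def extractAx : L.Sentence :=
  ∀' ∃' ∀' (memF (&2) (&1) ⇔ ∃' (isPairF (&3) (&0) (&2) ⊓ memF (&3) (&0)))

/-- `w = v[v]`, i.e. `∀u(u∈w ↔ ∃z(z=⟨v,u⟩ ∧ z∈v))`, here with `v = &1`, `w = &2`
in context `3` (as used in the axioms for `A` and `B`). -/
def wEqExtractF : L.BoundedFormula Empty 3 :=
  ∀' (memF (&3) (&2) ⇔ ∃' (isPairF (&4) (&1) (&3) ⊓ memF (&4) (&1)))

/-- The axiom `∀x(x∈A ↔ ∃v∃w(x=⟨v,w⟩ ∧ (w∈w ∨ w=v[v])))`. -/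
def axA : L.Sentence :=
  ∀' (memF (&0) (Constants.term cA) ⇔
    ∃' ∃' (isPairF (&0) (&1) (&2) ⊓ (memF (&2) (&2) ⊔ wEqExtractF)))

/-- The axiom `∀x(x∈B ↔ ∃v∃w(x=⟨v,w⟩ ∧ (w∈w ∧ ¬w=v[v])))`. -/
def axB : L.Sentence :=
  ∀' (memF (&0) (Constants.term cB) ⇔
    ∃' ∃' (isPairF (&0) (&1) (&2) ⊓ (memF (&2) (&2) ⊓ ∼wEqExtractF)))

/-- The axiom `∀x(x∈H⁺ ↔ ∃z(z=⟨A,x⟩ ∧ z∈A))`. -/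
def axHp : L.Sentence :=
  ∀' (memF (&0) (Constants.term cHp) ⇔
    ∃' (isPairF (&1) (Constants.term cA) (&0) ⊓ memF (&1) (Constants.term cA)))

/-- The axiom `∀x(x∈H⁻ ↔ ∃z(z=⟨B,x⟩ ∧ z∈B))`. -/
def axHm : L.Sentence :=
  ∀' (memF (&0) (Constants.term cHm) ⇔
    ∃' (isPairF (&1) (Constants.term cB) (&0) ⊓ memF (&1) (Constants.term cB)))

/-- The theory `T_H`: extensionality, pairing, extracting, and the defining axioms
of `A`, `B`, `H⁺` and `H⁻`. -/
def TH : L.Theory := {extAx, pairAx, extractAx, axA, axB, axHp, axHm}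

/-!
Kuratowski pairs are injective even without extensionality, since membership in a pair and in
its components is pinned down by equations: `a` is the common element of the members of
`⟨a,b⟩`, and `b` is then read off their union. Hence the members of `H⁺ = A[A]` are exactly
the `x` with `⟨A,x⟩ ∈ A`, i.e. those with `x ∈ x ∨ x = A[A]`, and by extensionality `x = A[A]`
means `x = H⁺`. The same argument with `B` gives the characterization of `H⁻`.
-/
section Membership

variable {α : Type*} {mem : α → α → Prop}

variable (mem) in
def IsKuratowskiPair (z a b : α) : Prop :=
  ∃ p q, ((∀ x, mem x p ↔ x = a) ∧ (∀ x, mem x q ↔ x = a ∨ x = b)) ∧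
    (∀ x, mem x z ↔ x = p ∨ x = q)

-- The paper's `w = v[v]`.
variable (mem) in
def IsSelfExtract (w v : α) : Prop :=
  ∀ u, mem u w ↔ ∃ z, IsKuratowskiPair mem z v u ∧ mem z v

namespace IsKuratowskiPair

variable {z a b a' b' : α}

theorem forall_mem_iff (h : IsKuratowskiPair mem z a b) (x : α) :
    (∀ y, mem y z → mem x y) ↔ x = a := by
  obtain ⟨p, q, ⟨hp, hq⟩, hz⟩ := h
  refine ⟨fun hx => (hp x).1 (hx p ((hz p).2 (Or.inl rfl))), ?_⟩
  rintro rfl y hy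
  rcases (hz y).1 hy with rfl | rfl
  exacts [(hp x).2 rfl, (hq x).2 (Or.inl rfl)]

theorem exists_mem_iff (h : IsKuratowskiPair mem z a b) (x : α) :
    (∃ y, mem y z ∧ mem x y) ↔ x = a ∨ x = b := by
  obtain ⟨p, q, ⟨hp, hq⟩, hz⟩ := h
  constructor
  · rintro ⟨y, hy, hxy⟩
    rcases (hz y).1 hy with rfl | rfl
    exacts [Or.inl ((hp x).1 hxy), (hq x).1 hxy]
  · exact fun hx => ⟨q, (hz q).2 (Or.inr rfl), (hq x).2 hx⟩

theorem inj (h : IsKuratowskiPair mem z a b) (h' : IsKuratowskiPair mem z a' b') :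
    a = a' ∧ b = b' := by
  have ha : a = a' := (h'.forall_mem_iff a).1 ((h.forall_mem_iff a).2 rfl)
  subst ha
  have hb : b = a ∨ b = b' := (h'.exists_mem_iff b).1 ((h.exists_mem_iff b).2 (Or.inr rfl))
  have hb' : b' = a ∨ b' = b := (h.exists_mem_iff b').1 ((h'.exists_mem_iff b').2 (Or.inr rfl))
  refine ⟨rfl, ?_⟩
  rcases hb with rfl | rfl
  · rcases hb' with rfl | rfl <;> rfl
  · rfl

end IsKuratowskiPair

theorem exists_isKuratowskiPair (hpair : ∀ a b : α, ∃ y, ∀ x, mem x y ↔ x = a ∨ x = b)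
    (a b : α) : ∃ z, IsKuratowskiPair mem z a b := by
  obtain ⟨p, hp⟩ := hpair a a
  obtain ⟨q, hq⟩ := hpair a b
  obtain ⟨z, hz⟩ := hpair p q
  exact ⟨z, p, q, ⟨fun x => (hp x).trans or_self_iff, hq⟩, hz⟩

theorem IsSelfExtract.isSelfExtract_iff_eq (hext : ∀ y z : α, (∀ x, mem x y ↔ mem x z) → y = z)
    {h c : α} (hh : IsSelfExtract mem h c) {w : α} : IsSelfExtract mem w c ↔ w = h :=
  ⟨fun hw => hext w h fun u => (hw u).trans (hh u).symm, by rintro rfl; exact hh⟩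

theorem IsSelfExtract.mem_iff (hpair : ∀ a b : α, ∃ y, ∀ x, mem x y ↔ x = a ∨ x = b)
    {P : α → α → Prop} {c h : α} (hc : ∀ z, mem z c ↔ ∃ v w, IsKuratowskiPair mem z v w ∧ P v w)
    (hh : IsSelfExtract mem h c) (x : α) : mem x h ↔ P c x := by
  rw [hh x]
  constructor
  · rintro ⟨z, hz, hzc⟩
    obtain ⟨v, w, hz', hP⟩ := (hc z).1 hzc
    obtain ⟨rfl, rfl⟩ := hz'.inj hz
    exact hP
  · intro hP
    obtain ⟨z, hz⟩ := exists_isKuratowskiPair hpair c x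
    exact ⟨z, hz, (hc z).2 ⟨c, x, hz, hP⟩⟩

end Membership

section Realize

variable {M : Type*} [L.Structure M]

def Mem (x y : M) : Prop := Structure.RelMap memRel ![x, y]

section Snoc

variable {α : Type*} {n : ℕ} (xs : Fin n → α) (a b c : α)

@[simp] theorem snoc₃_apply_self (h) : (Fin.snoc (Fin.snoc (Fin.snoc xs a) b) c : _ → α) ⟨n, h⟩ = a := by
  simp [Fin.snoc]

@[simp] theorem snoc₃_apply_add_one (h) :
    (Fin.snoc (Fin.snoc (Fin.snoc xs a) b) c : _ → α) ⟨n + 1, h⟩ = b := by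
  simp [Fin.snoc]

@[simp] theorem snoc₃_apply_add_two (h) :
    (Fin.snoc (Fin.snoc (Fin.snoc xs a) b) c : _ → α) ⟨n + 2, h⟩ = c := by
  simp [Fin.snoc]

end Snoc

@[simp] theorem realize_memF {n : ℕ} (t₁ t₂ : L.Term (Empty ⊕ Fin n)) (v : Empty → M)
    (xs : Fin n → M) :
    (memF t₁ t₂).Realize v xs ↔ Mem (t₁.realize (Sum.elim v xs)) (t₂.realize (Sum.elim v xs)) := by
  simp [memF, Mem]

@[simp] theorem realize_tl_snoc₃ {n : ℕ} (t : L.Term (Empty ⊕ Fin n)) (v : Empty → M)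
    (xs : Fin n → M) (a b c : M) :
    (tl 3 t).realize (Sum.elim v (Fin.snoc (Fin.snoc (Fin.snoc xs a) b) c)) =
      t.realize (Sum.elim v xs) := by
  simp only [tl, Term.realize_relabel]
  congr 1
  ext (e | i)
  · exact e.elim
  · exact (Fin.snoc_castSucc (α := fun _ => M) ..).trans <|
      (Fin.snoc_castSucc ..).trans (Fin.snoc_castSucc ..)

@[simp] theorem realize_isPairF {n : ℕ} (z a b : L.Term (Empty ⊕ Fin n)) (v : Empty → M)
    (xs : Fin n → M) :
    (isPairF z a b).Realize v xs ↔ IsKuratowskiPair Mem (z.realize (Sum.elim v xs))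
      (a.realize (Sum.elim v xs)) (b.realize (Sum.elim v xs)) := by
  simp [isPairF, IsKuratowskiPair]

theorem realize_extAx : M ⊨ extAx ↔ ∀ y z : M, (∀ x, Mem x y ↔ Mem x z) → y = z := by
  simp [extAx, Sentence.Realize, Formula.Realize, Fin.snoc]

theorem realize_pairAx : M ⊨ pairAx ↔ ∀ a b : M, ∃ y, ∀ x, Mem x y ↔ x = a ∨ x = b := by
  simp [pairAx, Sentence.Realize, Formula.Realize, Fin.snoc]

theorem realize_axA : M ⊨ axA ↔ ∀ z, Mem z (cA : M) ↔
    ∃ v w, IsKuratowskiPair Mem z v w ∧ (Mem w w ∨ IsSelfExtract Mem w v) := by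
  simp [axA, wEqExtractF, IsSelfExtract, Sentence.Realize, Formula.Realize, Fin.snoc]

theorem realize_axB : M ⊨ axB ↔ ∀ z, Mem z (cB : M) ↔
    ∃ v w, IsKuratowskiPair Mem z v w ∧ (Mem w w ∧ ¬ IsSelfExtract Mem w v) := by
  simp [axB, wEqExtractF, IsSelfExtract, Sentence.Realize, Formula.Realize, Fin.snoc]

theorem realize_axHp : M ⊨ axHp ↔ IsSelfExtract Mem (cHp : M) cA := by
  simp [axHp, IsSelfExtract, Sentence.Realize, Formula.Realize, Fin.snoc]

theorem realize_axHm : M ⊨ axHm ↔ IsSelfExtract Mem (cHm : M) cB := by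
  simp [axHm, IsSelfExtract, Sentence.Realize, Formula.Realize, Fin.snoc]

end Realize

namespace TH

variable (M : TH.ModelType)

theorem mem_Hp_iff (x : M) : Mem x (cHp : M) ↔ Mem x x ∨ x = cHp := by
  have hext := realize_extAx.1 (TH.realize_sentence_of_mem (M := M) (by simp [TH]))
  have hpair := realize_pairAx.1 (TH.realize_sentence_of_mem (M := M) (by simp [TH]))
  have hA := realize_axA.1 (TH.realize_sentence_of_mem (M := M) (by simp [TH]))
  have hHp := realize_axHp.1 (TH.realize_sentence_of_mem (M := M) (by simp [TH]))
  rw [hHp.mem_iff hpair hA, hHp.isSelfExtract_iff_eq hext]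

theorem mem_Hm_iff (x : M) : Mem x (cHm : M) ↔ Mem x x ∧ x ≠ cHm := by
  have hext := realize_extAx.1 (TH.realize_sentence_of_mem (M := M) (by simp [TH]))
  have hpair := realize_pairAx.1 (TH.realize_sentence_of_mem (M := M) (by simp [TH]))
  have hB := realize_axB.1 (TH.realize_sentence_of_mem (M := M) (by simp [TH]))
  have hHm := realize_axHm.1 (TH.realize_sentence_of_mem (M := M) (by simp [TH]))
  rw [hHm.mem_iff hpair hB, hHm.isSelfExtract_iff_eq hext]

end TH

/-- In `T_H` the membership characterizations of `H⁺` and `H⁻` are provable: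
`T_H ⊨ ∀x(x∈H⁺ ↔ (x∈x ∨ x=H⁺))` and `T_H ⊨ ∀x(x∈H⁻ ↔ (x∈x ∧ x≠H⁻))`. -/
theorem TH_characterizations :
    (TH ⊨ᵇ ((∀' (memF (&0) (Constants.term cHp) ⇔
        (memF (&0) (&0) ⊔ ((&0) =' (Constants.term cHp))))) : L.Sentence)) ∧
    (TH ⊨ᵇ ((∀' (memF (&0) (Constants.term cHm) ⇔
        (memF (&0) (&0) ⊓ ∼((&0) =' (Constants.term cHm))))) : L.Sentence)) := by
  refine ⟨Theory.models_sentence_iff.2 fun M => ?_, Theory.models_sentence_iff.2 fun M => ?_⟩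
  · simpa [Sentence.Realize, Formula.Realize, Fin.snoc] using TH.mem_Hp_iff M
  · simpa [Sentence.Realize, Formula.Realize, Fin.snoc] using TH.mem_Hm_iff M

end CoRussellParadox
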